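/- Let G be a finite simple graph with vertex set V, let k ≤ m be positive integers, and let T ⊆ V be an m-dominating set with |Γ_T(Z)| ≥ k − 1 for every T-cut Z (T is (k−1)-connected). Let S ⊆ V \ T. If every demand cut X (every T-cut X with |Γ_T(X)| = k − 1) is covered by some T-path all of whose vertices lie in T ∪ S, then |Γ_{T∪S}(Y)| ≥ k for every (T ∪ S)-cut Y; that is, the subgraph of G induced by T ∪ S is k-connected. -/

import Mathlib

/-!
Suppose `Y` is a `(T ∪ S)`-cut with fewer than `k` neighbours in `T ∪ S`. If `T ⊆ Y⁺` or
`Y ∩ T = ∅`, some vertex outside `T` (one of `T ∪ S` outside `Y⁺`, resp. one of `Y`) has all of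
its at least `m ≥ k` neighbours in `T` inside `Γ(Y)`, which is impossible. Otherwise `X = Y ∩ T`
is a `T`-cut with `Γ_T(X) ⊆ Γ_{T ∪ S}(Y)`; `(k-1)`-connectivity of `T` squeezes both sets to the
same `k - 1` elements, so `X` is a demand cut and `Γ_{T ∪ S}(Y) ⊆ T`. The covering `T`-path runs
inside `T ∪ S` from `Y` to a vertex outside `Y⁺`, so it meets `Γ_{T ∪ S}(Y) ⊆ T` at an inner
vertex, contradicting that inner vertices avoid `T`.
-/

/-- `nbr G X` is Γ(X): the set of vertices outside `X` adjacent to a vertex of `X`. -/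
def nbr {V : Type*} [Fintype V] [DecidableEq V] (G : SimpleGraph V) [DecidableRel G.Adj]
    (X : Finset V) : Finset V :=
  Finset.univ.filter (fun v => v ∉ X ∧ ∃ u ∈ X, G.Adj u v)

/-- `cl G X` is X⁺ = X ∪ Γ(X). -/
def cl {V : Type*} [Fintype V] [DecidableEq V] (G : SimpleGraph V) [DecidableRel G.Adj]
    (X : Finset V) : Finset V :=
  X ∪ nbr G X

open Finset

section Neighbourhood

variable {V : Type*} [Fintype V] [DecidableEq V] {G : SimpleGraph V} [DecidableRel G.Adj]
  {X Y T : Finset V} {u v w : V}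

lemma mem_nbr : v ∈ nbr G X ↔ v ∉ X ∧ ∃ u ∈ X, G.Adj u v := by
  simp [nbr]

lemma mem_cl : v ∈ cl G X ↔ v ∈ X ∨ v ∈ nbr G X :=
  mem_union

lemma mem_nbr_of_adj (hu : u ∈ X) (hv : v ∉ X) (huv : G.Adj u v) : v ∈ nbr G X :=
  mem_nbr.2 ⟨hv, u, hu, huv⟩

lemma cl_mono (h : X ⊆ Y) : cl G X ⊆ cl G Y := by
  intro v hv
  by_cases hvY : v ∈ Y
  · exact mem_union_left _ hvY
  obtain hvX | hvN := mem_cl.1 hv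
  · exact absurd (h hvX) hvY
  obtain ⟨-, u, huX, huv⟩ := mem_nbr.1 hvN
  exact mem_union_right _ (mem_nbr_of_adj (h huX) hvY huv)

lemma nbr_inter_inter_subset (Y T : Finset V) : nbr G (Y ∩ T) ∩ T ⊆ nbr G Y ∩ T := by
  intro v hv
  obtain ⟨hvN, hvT⟩ := mem_inter.1 hv
  obtain ⟨hvX, u, huX, huv⟩ := mem_nbr.1 hvN
  exact mem_inter.2
    ⟨mem_nbr_of_adj (mem_of_mem_inter_left huX) (fun hvY => hvX (mem_inter.2 ⟨hvY, hvT⟩)) huv, hvT⟩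

lemma filter_adj_subset_nbr_inter_of_mem (hw : w ∈ Y) (hYT : Disjoint Y T) :
    T.filter (G.Adj w) ⊆ nbr G Y ∩ T := by
  intro t ht
  obtain ⟨htT, hwt⟩ := mem_filter.1 ht
  exact mem_inter.2 ⟨mem_nbr_of_adj hw (disjoint_right.1 hYT htT) hwt, htT⟩

lemma filter_adj_subset_nbr_inter_of_notMem_cl (hw : w ∉ cl G Y) (hT : T ⊆ cl G Y) :
    T.filter (G.Adj w) ⊆ nbr G Y ∩ T := by
  intro t ht
  obtain ⟨htT, hwt⟩ := mem_filter.1 ht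
  have htY : t ∉ Y := fun htY =>
    hw (mem_union_right _ (mem_nbr_of_adj htY (fun hwY => hw (mem_union_left _ hwY)) hwt.symm))
  exact mem_inter.2 ⟨(mem_cl.1 (hT htT)).resolve_left htY, htT⟩

lemma SimpleGraph.Walk.exists_mem_support_mem_nbr {a b : V} (p : G.Walk a b) (ha : a ∈ X)
    (hb : b ∉ cl G X) : ∃ u ∈ p.support, u ∈ nbr G X := by
  have hbX : b ∉ (X : Set V) := fun h => hb (mem_union_left _ h)
  obtain ⟨d, hd, hfst, hsnd⟩ := p.exists_boundary_dart X ha hbX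
  exact ⟨d.snd, p.dart_snd_mem_support_of_mem_darts hd, mem_nbr_of_adj hfst hsnd d.adj⟩

variable {m : ℕ}

lemma sdiff_cl_nonempty_of_card_nbr_inter_lt (hdom : ∀ v ∉ T, m ≤ #(T.filter (G.Adj v)))
    (hw : w ∉ cl G Y) (hlt : #(nbr G Y ∩ T) < m) : (T \ cl G Y).Nonempty := by
  by_contra! hTY
  have hwT : w ∉ T := fun hwT => notMem_empty w (hTY ▸ mem_sdiff.2 ⟨hwT, hw⟩)
  have hsub := filter_adj_subset_nbr_inter_of_notMem_cl hw (sdiff_eq_empty_iff_subset.1 hTY)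
  exact (hdom w hwT).not_gt ((card_le_card hsub).trans_lt hlt)

lemma inter_nonempty_of_card_nbr_inter_lt (hdom : ∀ v ∉ T, m ≤ #(T.filter (G.Adj v)))
    (hY : Y.Nonempty) (hlt : #(nbr G Y ∩ T) < m) : (Y ∩ T).Nonempty := by
  by_contra! hYT
  obtain ⟨w, hw⟩ := hY
  have hwT : w ∉ T := fun hwT => notMem_empty w (hYT ▸ mem_inter.2 ⟨hw, hwT⟩)
  have hsub := filter_adj_subset_nbr_inter_of_mem (G := G) hw (disjoint_iff_inter_eq_empty.2 hYT)
  exact (hdom w hwT).not_gt ((card_le_card hsub).trans_lt hlt)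

/-- The walk leaves `Y⁺` through `Γ_U(Y) = Γ_T(Y ∩ T) ⊆ T`. -/
lemma SimpleGraph.Walk.exists_inner_mem_of_nbr_inter_eq {U : Finset V} {a b : V} (p : G.Walk a b)
    (hTU : T ⊆ U) (heq : nbr G (Y ∩ T) ∩ T = nbr G Y ∩ U) (hpU : ∀ w ∈ p.support, w ∈ U)
    (ha : a ∈ Y) (hb : b ∈ T \ cl G (Y ∩ T)) : ∃ u ∈ p.support, u ≠ a ∧ u ≠ b ∧ u ∈ T := by
  obtain ⟨hbT, hbX⟩ := mem_sdiff.1 hb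
  have hbY : b ∉ cl G Y := fun h => hbX <| by
    rcases mem_cl.1 h with hbY | hbN
    · exact mem_union_left _ (mem_inter.2 ⟨hbY, hbT⟩)
    · exact mem_union_right _ (mem_of_mem_inter_left (heq ▸ mem_inter.2 ⟨hbN, hTU hbT⟩))
  obtain ⟨u, hup, huN⟩ := p.exists_mem_support_mem_nbr ha hbY
  refine ⟨u, hup, ?_, ?_, mem_of_mem_inter_right (heq ▸ mem_inter.2 ⟨huN, hpU u hup⟩)⟩
  · rintro rfl
    exact (mem_nbr.1 huN).1 ha
  · rintro rfl
    exact hbY (mem_union_right _ huN)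

end Neighbourhood

theorem stmt_5_general {V : Type*} [Fintype V] [DecidableEq V]
    (G : SimpleGraph V) [DecidableRel G.Adj] (k m : ℕ) (hkm : k ≤ m)
    -- T is an m-dominating set
    (T : Finset V)
    (hdom : ∀ v : V, v ∉ T → m ≤ (T.filter (fun u => G.Adj v u)).card)
    -- T is (k-1)-connected: |Γ_T(Z)| ≥ k-1 for every T-cut Z
    (hTconn : ∀ Z : Finset V, Z ⊆ T → Z.Nonempty → (T \ cl G Z).Nonempty →
      k - 1 ≤ (nbr G Z ∩ T).card)
    (S : Finset V)
    -- every demand cut is covered by a T-path whose vertices all lie in T ∪ S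
    (hcov : ∀ X : Finset V, X ⊆ T → X.Nonempty → (T \ cl G X).Nonempty →
      (nbr G X ∩ T).card = k - 1 →
      ∃ (a b : V) (p : G.Walk a b), p.IsPath ∧ a ∈ X ∧ b ∈ T \ cl G X ∧
        (∀ w ∈ p.support, w ≠ a → w ≠ b → w ∉ T) ∧ (∀ w ∈ p.support, w ∈ T ∪ S)) :
    -- then G[T ∪ S] is k-connected: |Γ_{T∪S}(Y)| ≥ k for every (T ∪ S)-cut Y
    ∀ Y : Finset V, Y ⊆ T ∪ S → Y.Nonempty → ((T ∪ S) \ cl G Y).Nonempty →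
      k ≤ (nbr G Y ∩ (T ∪ S)).card := by
  rintro Y - hYne ⟨w, hw⟩
  by_contra! hlt
  have hNT : nbr G Y ∩ T ⊆ nbr G Y ∩ (T ∪ S) := inter_subset_inter_left subset_union_left
  have hltm : #(nbr G Y ∩ T) < m := (card_le_card hNT).trans_lt (hlt.trans_le hkm)
  obtain ⟨t, ht⟩ := sdiff_cl_nonempty_of_card_nbr_inter_lt hdom (mem_sdiff.1 hw).2 hltm
  have hX : (Y ∩ T).Nonempty := inter_nonempty_of_card_nbr_inter_lt hdom hYne hltm
  have hXcut : (T \ cl G (Y ∩ T)).Nonempty :=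
    ⟨t, sdiff_subset_sdiff subset_rfl (cl_mono inter_subset_left) ht⟩
  have hXY : nbr G (Y ∩ T) ∩ T ⊆ nbr G Y ∩ (T ∪ S) := (nbr_inter_inter_subset Y T).trans hNT
  have hconn := hTconn (Y ∩ T) inter_subset_right hX hXcut
  have hcard := card_le_card hXY
  -- `k - 1 ≤ #Γ_T(Y ∩ T) ≤ #Γ_{T ∪ S}(Y) < k`
  have heq : nbr G (Y ∩ T) ∩ T = nbr G Y ∩ (T ∪ S) := eq_of_subset_of_card_le hXY (by omega)
  obtain ⟨a, b, p, -, haX, hb, hinner, hpTS⟩ :=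
    hcov (Y ∩ T) inter_subset_right hX hXcut (by omega)
  obtain ⟨u, hup, hua, hub, huT⟩ :=
    p.exists_inner_mem_of_nbr_inter_eq subset_union_left heq hpTS (mem_of_mem_inter_left haX) hb
  exact hinner u hup hua hub huT

theorem stmt_5 {V : Type*} [Fintype V] [DecidableEq V]
    (G : SimpleGraph V) [DecidableRel G.Adj] (k m : ℕ) (hk : 1 ≤ k) (hkm : k ≤ m)
    -- T is an m-dominating set
    (T : Finset V)
    (hdom : ∀ v : V, v ∉ T → m ≤ (T.filter (fun u => G.Adj v u)).card)
    -- T is (k-1)-connected: |Γ_T(Z)| ≥ k-1 for every T-cut Z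
    (hTconn : ∀ Z : Finset V, Z ⊆ T → Z.Nonempty → (T \ cl G Z).Nonempty →
      k - 1 ≤ (nbr G Z ∩ T).card)
    (S : Finset V) (hS : S ⊆ Finset.univ \ T)
    -- every demand cut is covered by a T-path whose vertices all lie in T ∪ S
    (hcov : ∀ X : Finset V, X ⊆ T → X.Nonempty → (T \ cl G X).Nonempty →
      (nbr G X ∩ T).card = k - 1 →
      ∃ (a b : V) (p : G.Walk a b), p.IsPath ∧ a ∈ X ∧ b ∈ T \ cl G X ∧
        (∀ w ∈ p.support, w ≠ a → w ≠ b → w ∉ T) ∧ (∀ w ∈ p.support, w ∈ T ∪ S)) :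
    -- then G[T ∪ S] is k-connected: |Γ_{T∪S}(Y)| ≥ k for every (T ∪ S)-cut Y
    ∀ Y : Finset V, Y ⊆ T ∪ S → Y.Nonempty → ((T ∪ S) \ cl G Y).Nonempty →
      k ≤ (nbr G Y ∩ (T ∪ S)).card :=
  stmt_5_general G k m hkm T hdom hTconn S hcov
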